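/- Let q be a prime power, B ∈ F_q^{m×b} a matrix of rank b whose column span is an η-biased linear code for some η ≥ 0, and f: F_q^b → ℝ a non-negative function. Then E_{x∼Emp_B}[f(x)] ≤ (1 + q^b·η) · E_{x∼U(F_q^b)}[f(x)], where U(F_q^b) is the uniform distribution on F_q^b. -/

import Mathlib

open Finset

noncomputable section

open scoped Classical in
/-- `G` is a `d`-regular graph in which every eigenvalue of the adjacency matrix other than
the top eigenvalue `d` has absolute value at most `lam * d` (stated via the standard
equivalent quadratic-form characterization on the orthogonal complement of the
all-ones vector). -/
def IsExpander {V : Type*} [Fintype V] (d : ℕ) (lam : ℝ) (G : SimpleGraph V) : Prop :=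
  G.IsRegularOfDegree d ∧
    ∀ v : V → ℝ, (∑ i, v i) = 0 →
      Real.sqrt (∑ i, ((G.adjMatrix ℝ).mulVec v i) ^ 2) ≤ lam * d * Real.sqrt (∑ i, (v i) ^ 2)

open scoped Classical in
/-- Probability that the stationary random walk of length `n` on the `d`-regular graph `G`
equals the sequence `x` (the first vertex is uniform, each subsequent vertex is a uniform
neighbour of the previous one). -/
def walkProb {V : Type*} [Fintype V] {n : ℕ} (G : SimpleGraph V) (d : ℕ)
    (x : Fin n → V) : ℝ :=
  (1 / (Fintype.card V)) * ∏ j ∈ Finset.range (n - 1),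
    if h : j + 1 < n then
      (if G.Adj (x ⟨j, Nat.lt_of_succ_lt h⟩) (x ⟨j + 1, h⟩) then (1 : ℝ) / d else 0)
    else 1

open scoped Classical in
/-- Probability of the event `E` under the stationary random walk of length `n` on `G`. -/
def walkPr {V : Type*} [Fintype V] {n : ℕ} (G : SimpleGraph V) (d : ℕ)
    (E : (Fin n → V) → Prop) : ℝ :=
  ∑ x : Fin n → V, if E x then walkProb G d x else 0

/-- Expectation of `f` under the stationary random walk of length `n` on `G`. -/
def walkExp {V : Type*} [Fintype V] {n : ℕ} (G : SimpleGraph V) (d : ℕ)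
    (f : (Fin n → V) → ℝ) : ℝ :=
  ∑ x : Fin n → V, walkProb G d x * f x

/-- Puncturing the word `u` along the index sequence `x`. -/
def punct {V F : Type*} {n : ℕ} (x : Fin n → V) (u : V → F) : Fin n → F :=
  fun j => u (x j)

/-- The punctured code. -/
def punctCode {V F : Type*} {n : ℕ} (x : Fin n → V) (D : Set (V → F)) : Set (Fin n → F) :=
  punct x '' D

/-- The punctured code of a linear code, as a linear code. -/
def punctSub {V F : Type*} [Semiring F] {n : ℕ} (x : Fin n → V) (D : Submodule F (V → F)) :
    Submodule F (Fin n → F) :=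
  D.map (LinearMap.funLeft F F x)

/-- The character sum `∑ i, ω^(tr (a * c i))` where `ω = e^(2πi/p)` and `tr` is the
field trace to `ZMod p`. -/
def biasSum (p : ℕ) {F : Type*} [Field F] [Algebra (ZMod p) F] {V : Type*} [Fintype V]
    (c : V → F) (a : F) : ℂ :=
  ∑ i, Complex.exp (Complex.I *
    ((2 * Real.pi * (((Algebra.trace (ZMod p) F (a * c i)).val : ℝ) / (p : ℝ)) : ℝ) : ℂ))

/-- A code `D ⊆ F^V` is `η`-biased. -/
def IsBiasedCode (p : ℕ) {F : Type*} [Field F] [Algebra (ZMod p) F] {V : Type*} [Fintype V]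
    (η : ℝ) (D : Set (V → F)) : Prop :=
  ∀ c ∈ D, c ≠ 0 → ∀ a : F, a ≠ 0 → ‖biasSum p c a‖ ≤ (Fintype.card V : ℝ) * η

open scoped Classical in
/-- Empirical distribution of the entries (rows) of `A`. -/
def emp {n : ℕ} {α : Type*} (A : Fin n → α) (x : α) : ℝ :=
  ((Finset.univ.filter (fun i => A i = x)).card : ℝ) / n

/-- `q`-ary KL divergence. -/
def klq (q : ℝ) {α : Type*} [Fintype α] (τ σ : α → ℝ) : ℝ :=
  ∑ s, τ s * Real.logb q (τ s / σ s)

/-- `q`-ary entropy of a distribution. -/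
def entq (q : ℝ) {α : Type*} [Fintype α] (τ : α → ℝ) : ℝ :=
  -∑ s, τ s * Real.logb q (τ s)

/-- Binary entropy function. -/
def binH (x : ℝ) : ℝ := -(x * Real.logb 2 x) - (1 - x) * Real.logb 2 (1 - x)

open scoped Classical in
/-- `(ρ, L)`-list decodability with decoding radius `⌊ρ n⌋`. -/
def ListDecodable {F : Type*} {n : ℕ} (ρ : ℝ) (L : ℕ) (C : Set (Fin n → F)) : Prop :=
  ∀ z : Fin n → F, {c ∈ C | hammingDist c z ≤ ⌊ρ * (n : ℝ)⌋₊}.ncard ≤ L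

/-- `(ℓ, L)`-zero-error list recoverability. -/
def ZeroErrorListRecoverable {F : Type*} {n : ℕ} (ℓ L : ℕ) (C : Set (Fin n → F)) : Prop :=
  ∀ A : Fin n → Finset F, (∀ i, (A i).card ≤ ℓ) → {c ∈ C | ∀ i, c i ∈ A i}.ncard ≤ L

open scoped Classical in
/-- The set of coordinates on which some two distinct elements of `C'` agree. -/
def TSet {V F : Type*} [Fintype V] (C' : Finset (V → F)) : Finset V :=
  Finset.univ.filter fun j => ∃ c₁ ∈ C', ∃ c₂ ∈ C', c₁ ≠ c₂ ∧ c₁ j = c₂ j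

/-- The binary Hadamard code of dimension `k`. -/
def hadamardCode (k : ℕ) : Set ((Fin k → ZMod 2) → ZMod 2) :=
  Set.range fun x : Fin k → ZMod 2 => fun y => ∑ i, x i * y i

open scoped Classical in
/-- Probability that a uniformly random `k × n` generator matrix yields a code
satisfying property `P`. -/
def rlcProb {F : Type*} [Field F] [Fintype F] (n k : ℕ)
    (P : Set (Submodule F (Fin n → F))) : ℝ :=
  ((Finset.univ.filter (fun G : Matrix (Fin k) (Fin n) F =>
      LinearMap.range G.vecMulLinear ∈ P)).card : ℝ) /
    (Fintype.card (Matrix (Fin k) (Fin n) F) : ℝ)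

/-- The RLC threshold of a property. -/
def RLCthreshold {F : Type*} [Field F] [Fintype F] {n : ℕ}
    (P : Set (Submodule F (Fin n → F))) : ℝ :=
  sInf {R : ℝ | R ∈ Set.Icc (0 : ℝ) 1 ∧ 1 / 2 ≤ rlcProb n ⌊R * (n : ℝ)⌋₊ P}

/-- Monotone-increasing property. -/
def MonotoneIncreasing {F : Type*} [Field F] {n : ℕ}
    (P : Set (Submodule F (Fin n → F))) : Prop :=
  ∀ C₁ C₂ : Submodule F (Fin n → F), C₁ ≤ C₂ → C₁ ∈ P → C₂ ∈ P

/-- Row-symmetric property. -/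
def RowSymmetric {F : Type*} [Field F] {n : ℕ}
    (P : Set (Submodule F (Fin n → F))) : Prop :=
  ∀ (π : Equiv.Perm (Fin n)) (C : Submodule F (Fin n → F)),
    C ∈ P → C.map (LinearMap.funLeft F F π) ∈ P

/-- `b`-local property. -/
def BLocal {F : Type*} [Field F] {n : ℕ} (b : ℕ)
    (P : Set (Submodule F (Fin n → F))) : Prop :=
  ∃ 𝓑 : Set (Set (Fin n → F)), (∀ B ∈ 𝓑, B.Finite ∧ B.ncard ≤ b) ∧
    ∀ C : Submodule F (Fin n → F), C ∈ P ↔ ∃ B ∈ 𝓑, B ⊆ (C : Set (Fin n → F))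

open scoped Classical in
/-- Number of `n × b` matrices with empirical row distribution `τ` all of whose columns
lie in the punctured code. -/
def matCount {V F : Type*} [Fintype V] [Fintype F] {n b : ℕ} (x : Fin n → V)
    (D : Set (V → F)) (τ : (Fin b → F) → ℝ) : ℕ :=
  (Finset.univ.filter fun A : Fin n → Fin b → F =>
    emp A = τ ∧ ∀ j : Fin b, (fun i => A i j) ∈ punctCode x D).card

end

section CharAux

noncomputable def chi (p : ℕ) {F : Type*} [Field F] [Algebra (ZMod p) F] (t : F) : ℂ :=
  Complex.exp (Complex.I *
    ((2 * Real.pi * (((Algebra.trace (ZMod p) F t).val : ℝ) / (p : ℝ)) : ℝ) : ℂ))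

variable {p : ℕ} [Fact p.Prime] {F : Type*} [Field F] [Algebra (ZMod p) F]

lemma chi_eq (t : F) :
    chi p t = Complex.exp (2 * Real.pi * Complex.I / p) ^ (Algebra.trace (ZMod p) F t).val := by
  rw [chi, ← Complex.exp_nat_mul]
  congr 1
  have hp : (p : ℂ) ≠ 0 := Nat.cast_ne_zero.mpr (Fact.out : p.Prime).pos.ne'
  push_cast; field_simp

lemma omega_pow_mod {a b : ℕ} (h : a % p = b % p) :
    Complex.exp (2 * Real.pi * Complex.I / p) ^ a
      = Complex.exp (2 * Real.pi * Complex.I / p) ^ b := by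
  have hp : p ≠ 0 := (Fact.out : p.Prime).pos.ne'
  have hω : Complex.exp (2 * Real.pi * Complex.I / p) ^ p = 1 :=
    (Complex.isPrimitiveRoot_exp p hp).pow_eq_one
  have key : ∀ c : ℕ, Complex.exp (2 * Real.pi * Complex.I / p) ^ c
      = Complex.exp (2 * Real.pi * Complex.I / p) ^ (c % p) := by
    intro c
    conv_lhs => rw [← Nat.div_add_mod c p]
    rw [pow_add, pow_mul, hω, one_pow, one_mul]
  rw [key a, key b, h]

lemma chi_add (s t : F) : chi p (s + t) = chi p s * chi p t := by
  have : NeZero p := ⟨(Fact.out : p.Prime).pos.ne'⟩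
  rw [chi_eq, chi_eq, chi_eq, ← pow_add, map_add]
  apply omega_pow_mod
  rw [ZMod.val_add]
  exact Nat.mod_mod_of_dvd _ dvd_rfl

lemma chi_zero : chi p (0 : F) = 1 := by
  have : NeZero p := ⟨(Fact.out : p.Prime).pos.ne'⟩
  rw [chi_eq, map_zero, ZMod.val_zero, pow_zero]

lemma chi_abs (t : F) : ‖chi p t‖ = 1 := by
  rw [chi, mul_comm]
  exact Complex.norm_exp_ofReal_mul_I _

lemma chi_sum {ι : Type*} (s : Finset ι) (g : ι → F) :
    chi p (∑ j ∈ s, g j) = ∏ j ∈ s, chi p (g j) := by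
  induction s using Finset.cons_induction with
  | empty => simp [chi_zero]
  | cons i s hi ih => rw [Finset.sum_cons, Finset.prod_cons, chi_add, ih]

lemma sum_chi [Fintype F] : ∑ t : F, chi p t = 0 := by
  obtain ⟨x, hx⟩ : ∃ x : F, Algebra.trace (ZMod p) F x ≠ 0 := by
    have htr := (traceForm_nondegenerate (ZMod p) F).1 1
    simp_rw [Algebra.traceForm_apply, one_mul] at htr
    by_contra! hf
    exact one_ne_zero (htr hf)
  have hchi : chi p x ≠ 1 := by
    rw [chi_eq]
    have hp : p ≠ 0 := (Fact.out : p.Prime).pos.ne'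
    refine (Complex.isPrimitiveRoot_exp p hp).pow_ne_one_of_pos_of_lt ?_ ?_
    · exact fun h => hx (by rwa [← ZMod.val_eq_zero])
    · exact ZMod.val_lt _
  have hsum : chi p x * ∑ t : F, chi p t = ∑ t : F, chi p t := by
    rw [Finset.mul_sum]
    simp_rw [← chi_add]
    exact Fintype.sum_equiv (Equiv.addLeft x) _ _ fun t => rfl
  have := sub_eq_zero.mpr hsum
  rw [← sub_one_mul] at this
  rcases mul_eq_zero.mp this with h | h
  · exact absurd (sub_eq_zero.mp h) hchi
  · exact h

lemma sum_chi_mul [Fintype F] {t : F} (ht : t ≠ 0) : ∑ c : F, chi p (c * t) = 0 := by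
  have := Fintype.sum_equiv (Equiv.mulRight₀ t ht) (fun c : F => chi p (c * t)) (fun s => chi p s) fun c => rfl
  rw [this]; exact sum_chi

lemma sum_prod_chi [Fintype F] [DecidableEq F] {b : ℕ} (x y : Fin b → F) :
    ∑ a : Fin b → F, chi p (∑ j, a j * (y j - x j))
      = if y = x then ((Fintype.card F : ℂ)) ^ b else 0 := by
  have h1 : ∀ a : Fin b → F, chi p (∑ j, a j * (y j - x j))
      = ∏ j, chi p (a j * (y j - x j)) := fun a => chi_sum _ _
  simp_rw [h1]
  have h2 : (∑ a ∈ Fintype.piFinset (fun _ : Fin b => (Finset.univ : Finset F)),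
        ∏ j, chi p (a j * (y j - x j)))
      = ∏ j, ∑ c : F, chi p (c * (y j - x j)) :=
      (Finset.prod_univ_sum (fun _ : Fin b => (Finset.univ : Finset F))
        (fun j c => chi p (c * (y j - x j)))).symm
  rw [Fintype.piFinset_univ] at h2
  rw [h2]
  by_cases h : y = x
  · subst h
    simp [chi_zero, Finset.card_univ]
  · rw [if_neg h]
    obtain ⟨j0, hj0⟩ := Function.ne_iff.mp h
    exact Finset.prod_eq_zero (Finset.mem_univ j0) (sum_chi_mul (sub_ne_zero.mpr hj0))

def IsBiasedCode' (p : ℕ) {F : Type*} [Field F] [Algebra (ZMod p) F] {V : Type*} [Fintype V]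
    (η : ℝ) (D : Set (V → F)) : Prop :=
  ∀ c ∈ D, c ≠ 0 → ∀ a : F, a ≠ 0 →
    ‖∑ i, chi p (a * c i)‖ ≤ (Fintype.card V : ℝ) * η

open Finset in
lemma count_bound [Fintype F] [DecidableEq F] {m b : ℕ}
    (η : ℝ) (hη : 0 ≤ η) (B : Matrix (Fin m) (Fin b) F)
    (hinj : Function.Injective B.mulVecLin)
    (hbias : IsBiasedCode' p η (LinearMap.range B.mulVecLin : Set (Fin m → F)))
    (x : Fin b → F) :
    ((Finset.univ.filter fun i : Fin m => (fun j => B i j) = x).card : ℝ)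
        * (Fintype.card F : ℝ) ^ b
      ≤ m * (1 + (Fintype.card F : ℝ) ^ b * η) := by
  set N : ℝ := (Fintype.card F : ℝ) ^ b with hN
  set S : (Fin b → F) → ℂ := fun a => ∑ i, chi p (∑ j, a j * (B i j - x j)) with hS
  have key1 : ((Fintype.card F : ℂ)) ^ b
      * ((Finset.univ.filter fun i : Fin m => (fun j => B i j) = x).card : ℂ)
      = ∑ a : Fin b → F, S a := by
    rw [hS, Finset.sum_comm]
    have : ∀ i : Fin m, (∑ a : Fin b → F, chi p (∑ j, a j * (B i j - x j)))
        = if (fun j => B i j) = x then ((Fintype.card F : ℂ)) ^ b else 0 :=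
      fun i => sum_prod_chi x (fun j => B i j)
    simp_rw [this]
    rw [Finset.sum_ite, Finset.sum_const, Finset.sum_const_zero, add_zero, nsmul_eq_mul,
      mul_comm]
  -- S 0 has absolute value m
  have hS0 : S 0 = (m : ℂ) := by
    simp [hS, chi_zero]
  -- each other S a is small
  have hSa : ∀ a : Fin b → F, a ≠ 0 → ‖S a‖ ≤ (m : ℝ) * η := by
    intro a ha
    have hdec : ∀ i, (∑ j, a j * (B i j - x j))
        = (B.mulVec a) i + (- ∑ j, a j * x j) := by
      intro i
      simp only [Matrix.mulVec, dotProduct, mul_sub, Finset.sum_sub_distrib]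
      rw [sub_eq_add_neg]
      congr 1
      exact Finset.sum_congr rfl fun j _ => mul_comm _ _
    have hne : B.mulVec a ≠ 0 := by
      intro h
      exact ha (hinj (by simpa [Matrix.mulVecLin_apply] using h))
    have hb := hbias (B.mulVec a) ⟨a, rfl⟩ hne 1 one_ne_zero
    simp only [one_mul, Fintype.card_fin] at hb
    calc ‖S a‖
        = ‖(∑ i, chi p ((B.mulVec a) i)) * chi p (- ∑ j, a j * x j)‖ := by
          rw [hS]
          simp_rw [hdec, chi_add]
          rw [← Finset.sum_mul]
      _ = ‖∑ i, chi p ((B.mulVec a) i)‖ := by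
          rw [norm_mul, chi_abs, mul_one]
      _ ≤ (m : ℝ) * η := hb
  -- put together
  have hcard : (Fintype.card (Fin b → F) : ℝ) = N := by
    simp [hN, Fintype.card_fun]
  have habs : ((Finset.univ.filter fun i : Fin m => (fun j => B i j) = x).card : ℝ) * N
      = ‖∑ a : Fin b → F, S a‖ := by
    rw [← key1]
    rw [show ((Fintype.card F : ℂ)) ^ b
        * ((Finset.univ.filter fun i : Fin m => (fun j => B i j) = x).card : ℂ)
        = ((((Finset.univ.filter fun i : Fin m => (fun j => B i j) = x).card : ℝ) * N : ℝ) : ℂ)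
      by push_cast [hN]; ring]
    rw [Complex.norm_real, Real.norm_of_nonneg (by positivity)]
  rw [habs]
  calc ‖∑ a : Fin b → F, S a‖
      ≤ ∑ a : Fin b → F, ‖S a‖ := norm_sum_le _ _
    _ = ‖S 0‖ + ∑ a ∈ ({0}ᶜ : Finset (Fin b → F)), ‖S a‖ :=
        Fintype.sum_eq_add_sum_compl 0 _
    _ ≤ (m : ℝ) + (Fintype.card (Fin b → F) : ℝ) * ((m : ℝ) * η) := by
        gcongr ?_ + ?_
        · rw [hS0]; simp
        · calc ∑ a ∈ ({0}ᶜ : Finset (Fin b → F)), ‖S a‖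
              ≤ ({0}ᶜ : Finset (Fin b → F)).card • ((m : ℝ) * η) :=
              Finset.sum_le_card_nsmul _ _ _ fun a ha =>
                hSa a (by simpa using (Finset.mem_compl.mp ha))
            _ ≤ (Fintype.card (Fin b → F) : ℝ) * ((m : ℝ) * η) := by
                rw [nsmul_eq_mul]
                exact mul_le_mul_of_nonneg_right
                  (by exact_mod_cast Finset.card_le_univ _) (by positivity)
    _ ≤ (m : ℝ) * (1 + N * η) := by
        rw [hcard]; ring_nf; nlinarith [hη, Nat.cast_nonneg (α := ℝ) m]

end CharAux

/-- expectation under the empirical row distribution of a biased matrix is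
close to the uniform expectation. -/
theorem emp_expectation_le {p : ℕ} [Fact p.Prime] {F : Type*} [Field F] [Fintype F]
    [DecidableEq F] [Algebra (ZMod p) F] (hchar : CharP F p) {m b : ℕ}
    (q : ℝ) (hq : q = (Fintype.card F : ℝ)) (η : ℝ) (hη : 0 ≤ η)
    (B : Matrix (Fin m) (Fin b) F) (hrank : B.rank = b)
    (hbias : IsBiasedCode p η (LinearMap.range B.mulVecLin : Set (Fin m → F)))
    (f : (Fin b → F) → ℝ) (hf : ∀ x, 0 ≤ f x) :
    ∑ x : Fin b → F, emp (fun i => B i) x * f x ≤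
      (1 + q ^ b * η) * ((∑ x : Fin b → F, f x) / q ^ b) := by
  have hq0 : (0 : ℝ) < q := by
    rw [hq]; exact_mod_cast Fintype.card_pos
  set N : ℝ := (Fintype.card F : ℝ) ^ b with hNdef
  have hqN : q ^ b = N := by rw [hq]
  have hN0 : (0 : ℝ) < N := by positivity
  have hbias' : IsBiasedCode' p η (LinearMap.range B.mulVecLin : Set (Fin m → F)) := hbias
  have hinj : Function.Injective B.mulVecLin := by
    rw [← LinearMap.ker_eq_bot]
    have h1 := LinearMap.finrank_range_add_finrank_ker B.mulVecLin
    rw [Matrix.rank] at hrank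
    rw [hrank, Module.finrank_fintype_fun_eq_card, Fintype.card_fin] at h1
    have h2 : Module.finrank F (LinearMap.ker B.mulVecLin) = 0 := by omega
    exact Submodule.finrank_eq_zero.mp h2
  have hpoint : ∀ x : Fin b → F, emp (fun i => B i) x ≤ (1 + N * η) / N := by
    intro x
    rcases Nat.eq_zero_or_pos m with hm | hm
    · subst hm
      have h0 : emp (fun i => B i) x = 0 := by simp [emp]
      rw [h0]; positivity
    · have hcb := count_bound η hη B hinj hbias' x
      have hemp : emp (fun i => B i) x
          = ((Finset.univ.filter fun i : Fin m => (fun j => B i j) = x).card : ℝ) / m := by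
        simp only [emp]
        congr 2
        · congr 1
          ext i
          simp
      rw [hemp, div_le_iff₀ (by exact_mod_cast hm), div_mul_eq_mul_div, le_div_iff₀ hN0]
      nlinarith [hcb]
  calc ∑ x : Fin b → F, emp (fun i => B i) x * f x
      ≤ ∑ x : Fin b → F, ((1 + N * η) / N) * f x :=
        Finset.sum_le_sum fun x _ => mul_le_mul_of_nonneg_right (hpoint x) (hf x)
    _ = (1 + q ^ b * η) * ((∑ x : Fin b → F, f x) / q ^ b) := by
        rw [← Finset.mul_sum, hqN]; ring
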